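/- arXiv:1510.06064 — 8 statements merged into one kernel-verified Lean document; each statement's English description precedes it below -/
import Mathlib

section
/- Fix a positive integer a. If (m₁, k₁) and (m₂, k₂) are two distinct pairs of positive integers, each satisfying a·S_{k_i}(m_i) = m_i^{k_i} for i = 1, 2, then m₁ ≠ m₂ and k₁ ≠ k₂. In other words, among the solutions (m, k) of a·S_k(m) = m^k, each value of m occurs for at most one k, and each value of k occurs for at most one m. -/
/-- `S k m = 1^k + 2^k + ⋯ + (m-1)^k`. -/
def S (k m : ℕ) : ℕ := ∑ j ∈ Finset.Ico 1 m, j ^ k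

/-!
Rewrite `a·S_k(m) = m^k` as `a · R k m = 1`, where `R k m = S_k(m)/m^k = ∑_{0<j<m} (j/m)^k`
(`normalizedPowerSum k m` below).
For `m ≥ 2` every summand lies in `(0, 1)`, so `R` is strictly decreasing in `k`; and
`R k m < R k (m+1)` because the summand `((j+1)/(m+1))^k` of `R k (m+1)` dominates the summand
`(j/m)^k` of `R k m`, with the extra positive summand `(1/(m+1))^k` left over. So `R` is
injective in each variable, while both solutions satisfy `R k m = a⁻¹`.
-/

open Finset

def normalizedPowerSum (k m : ℕ) : ℚ := ∑ j ∈ Ico 1 m, ((j : ℚ) / m) ^ k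

lemma normalizedPowerSum_eq_div (k m : ℕ) :
    normalizedPowerSum k m = S k m / (m : ℚ) ^ k := by
  simp [normalizedPowerSum, S, div_pow, sum_div]

lemma normalizedPowerSum_eq_inv {a k m : ℕ} (hm : m ≠ 0) (h : a * S k m = m ^ k) :
    normalizedPowerSum k m = (a : ℚ)⁻¹ := by
  refine eq_inv_of_mul_eq_one_right ?_
  rw [normalizedPowerSum_eq_div, mul_div_assoc', div_eq_one_iff_eq (by positivity)]
  exact_mod_cast h

lemma two_le_of_mul_S_eq_pow {a k m : ℕ} (hm : 0 < m) (h : a * S k m = m ^ k) : 2 ≤ m := by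
  by_contra! hlt
  obtain rfl : m = 1 := by omega
  simp [S] at h

lemma normalizedPowerSum_strictAnti {m : ℕ} (hm : 2 ≤ m) :
    StrictAnti fun k ↦ normalizedPowerSum k m := by
  refine strictAnti_nat_of_succ_lt fun k ↦ sum_lt_sum_of_nonempty ⟨1, by simp; omega⟩ ?_
  intro j hj
  rw [mem_Ico] at hj
  have hm₀ : (0 : ℚ) < m := by positivity
  have hj₀ : (0 : ℚ) < j := by exact_mod_cast hj.1
  have hjm : (j : ℚ) < m := by exact_mod_cast hj.2
  exact pow_lt_pow_right_of_lt_one₀ (div_pos hj₀ hm₀) ((div_lt_one hm₀).2 hjm) k.lt_succ_self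

lemma normalizedPowerSum_lt_succ {m : ℕ} (hm : 1 ≤ m) (k : ℕ) :
    normalizedPowerSum k m < normalizedPowerSum k (m + 1) := by
  have hshift : normalizedPowerSum k (m + 1) =
      ((1 : ℚ) / (m + 1)) ^ k + ∑ j ∈ Ico 1 m, (((j + 1 : ℕ) : ℚ) / (m + 1)) ^ k := by
    rw [normalizedPowerSum, ← sum_Ico_add' _ 0 m 1, sum_eq_sum_Ico_succ_bot (by omega)]
    push_cast
    ring
  have hle : ∀ j ∈ Ico 1 m, ((j : ℚ) / m) ^ k ≤ (((j + 1 : ℕ) : ℚ) / (m + 1)) ^ k := by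
    intro j hj
    rw [mem_Ico] at hj
    have hjm : (j : ℚ) ≤ m := by exact_mod_cast hj.2.le
    refine pow_le_pow_left₀ (by positivity) ?_ k
    rw [div_le_div_iff₀ (by positivity) (by positivity)]
    push_cast
    linarith
  rw [hshift, normalizedPowerSum]
  linarith [sum_le_sum hle, show (0 : ℚ) < (1 / (m + 1)) ^ k by positivity]

lemma normalizedPowerSum_strictMonoOn (k : ℕ) :
    StrictMonoOn (normalizedPowerSum k) (Set.Ici 1) :=
  strictMonoOn_of_lt_add_one Set.ordConnected_Ici fun _ _ hm _ ↦ normalizedPowerSum_lt_succ hm k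

theorem distinct_solutions_general (a m₁ k₁ m₂ k₂ : ℕ)
    (hm₁ : 0 < m₁) (hm₂ : 0 < m₂)
    (h₁ : a * S k₁ m₁ = m₁ ^ k₁) (h₂ : a * S k₂ m₂ = m₂ ^ k₂)
    (hne : (m₁, k₁) ≠ (m₂, k₂)) :
    m₁ ≠ m₂ ∧ k₁ ≠ k₂ := by
  have hR : normalizedPowerSum k₁ m₁ = normalizedPowerSum k₂ m₂ :=
    (normalizedPowerSum_eq_inv hm₁.ne' h₁).trans (normalizedPowerSum_eq_inv hm₂.ne' h₂).symm
  refine ⟨fun hm ↦ hne ?_, fun hk ↦ hne ?_⟩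
  · subst hm
    rw [(normalizedPowerSum_strictAnti (two_le_of_mul_S_eq_pow hm₁ h₁)).injective hR]
  · subst hk
    rw [(normalizedPowerSum_strictMonoOn k₁).injOn hm₁ hm₂ hR]

/-- Distinct solutions `(m₁, k₁)` and `(m₂, k₂)` of `a·S_k(m) = m^k` satisfy
`m₁ ≠ m₂` and `k₁ ≠ k₂`. -/
theorem distinct_solutions (a m₁ k₁ m₂ k₂ : ℕ) (ha : 0 < a)
    (hm₁ : 0 < m₁) (hk₁ : 0 < k₁) (hm₂ : 0 < m₂) (hk₂ : 0 < k₂)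
    (h₁ : a * S k₁ m₁ = m₁ ^ k₁) (h₂ : a * S k₂ m₂ = m₂ ^ k₂)
    (hne : (m₁, k₁) ≠ (m₂, k₂)) :
    m₁ ≠ m₂ ∧ k₁ ≠ k₂ :=
  distinct_solutions_general a m₁ k₁ m₂ k₂ hm₁ hm₂ h₁ h₂ hne
end

section
/- If a, k, m are positive integers with m ≥ 4 satisfying a·S_k(m) = m^k, then k is even. -/
open Finset

theorem dvd_two_mul_sum_range_pow_of_odd {k : ℕ} (hk : Odd k) (n : ℕ) :
    n ∣ 2 * ∑ j ∈ range (n + 1), j ^ k := by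
  have hpair : 2 * ∑ j ∈ range (n + 1), j ^ k = ∑ j ∈ range (n + 1), ((n - j) ^ k + j ^ k) := by
    rw [sum_add_distrib, ← sum_range_reflect _ (n + 1), Nat.add_sub_cancel]
    ring
  rw [hpair]
  refine dvd_sum fun j hj => ?_
  simpa [Nat.sub_add_cancel (mem_range_succ_iff.mp hj)] using
    Odd.nat_add_dvd_pow_add_pow (n - j) j hk

theorem S_eq_sum_range {k : ℕ} (hk : k ≠ 0) (m : ℕ) : S k m = ∑ j ∈ range m, j ^ k := by
  rcases Nat.eq_zero_or_pos m with rfl | hm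
  · rfl
  · rw [sum_range_eq_add_Ico _ hm, zero_pow hk, zero_add, S]

theorem dvd_two_mul_S_of_odd {k : ℕ} (hk : Odd k) (n : ℕ) : n ∣ 2 * S k (n + 1) := by
  rw [S_eq_sum_range hk.pos.ne']
  exact dvd_two_mul_sum_range_pow_of_odd hk n

theorem k_even_general (a k m : ℕ) (hm4 : 4 ≤ m)
    (heq : a * S k m = m ^ k) : Even k := by
  by_contra hodd
  obtain ⟨n, rfl⟩ : ∃ n, m = n + 1 := ⟨m - 1, by omega⟩
  have hdvd : n ∣ 2 * (n + 1) ^ k := by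
    rw [← heq, mul_left_comm]
    exact (dvd_two_mul_S_of_odd (Nat.not_even_iff_odd.mp hodd) n).mul_left a
  have hcop : n.Coprime ((n + 1) ^ k) :=
    (Nat.coprime_self_add_right.mpr (Nat.coprime_one_right n)).pow_right k
  have hn_le_two := Nat.le_of_dvd two_pos (hcop.dvd_of_dvd_mul_right hdvd)
  omega

/-- If `a·S_k(m) = m^k` with `m ≥ 4`, then `k` is even. -/
theorem k_even (a k m : ℕ) (ha : 0 < a) (hk : 0 < k) (hm4 : 4 ≤ m)
    (heq : a * S k m = m ^ k) : Even k :=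
  k_even_general a k m hm4 heq
end

section
/- Suppose a, k, m are positive integers with m ≥ 4 and k even satisfying a·S_k(m) = m^k. Then for every prime p dividing m, (p − 1) does not divide k. In particular, gcd(m, 6) = 1. -/
open Finset

lemma sum_range_mul_eq_sum_sum {M : Type*} [AddCommMonoid M] (f : ℕ → M) (q t : ℕ) :
    ∑ j ∈ range (q * t), f j = ∑ i ∈ range t, ∑ r ∈ range q, f (i * q + r) := by
  induction t with
  | zero => simp
  | succ t ih =>
    rw [Nat.mul_succ, sum_range_add, ih, sum_range_succ]
    simp only [mul_comm q t, add_comm]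

lemma dvd_mul_sum_range_of_even {k : ℕ} (hk : Even k) (n : ℕ) : n ∣ k * ∑ i ∈ range n, i := by
  obtain ⟨c, rfl⟩ := hk
  refine ⟨c * (n - 1), ?_⟩
  rw [show (c + c) * ∑ i ∈ range n, i = c * ((∑ i ∈ range n, i) * 2) by ring,
    sum_range_id_mul_two]
  ring

lemma Nat.Prime.pow_dvd_of_mul_eq_pow {p a s m k e : ℕ} (hp : p.Prime) (hm : m ≠ 0)
    (h : a * s = m ^ k) (hpm : p ^ (e + 1) ∣ m) (hps : ¬ p ^ (e + 1) ∣ s) : p ^ k ∣ a := by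
  have hmk : a * s ≠ 0 := h ▸ pow_ne_zero k hm
  have ha : a ≠ 0 := left_ne_zero_of_mul hmk
  have hs : s ≠ 0 := right_ne_zero_of_mul hmk
  have hval := congrArg (·.factorization p) h
  simp only [Nat.factorization_mul ha hs, Nat.factorization_pow, Finsupp.add_apply,
    Finsupp.smul_apply, smul_eq_mul] at hval
  have hvm : e + 1 ≤ m.factorization p := (hp.pow_dvd_iff_le_factorization hm).mp hpm
  have hvs : s.factorization p ≤ e := by
    by_contra! hlt
    exact hps ((hp.pow_dvd_iff_le_factorization hs).mpr hlt)
  rw [hp.pow_dvd_iff_le_factorization ha]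
  nlinarith

lemma natCast_S {R : Type*} [CommSemiring R] {k : ℕ} (hk : k ≠ 0) (m : ℕ) :
    (S k m : R) = ∑ j ∈ range m, (j : R) ^ k := by
  rcases m with _ | m
  · simp [S]
  · rw [S, range_eq_Ico, sum_eq_sum_Ico_succ_bot m.succ_pos]
    simp [hk]

lemma pow_lt_two_pow_mul_S {k m : ℕ} (hk : k ≠ 0) (hm : 3 ≤ m) : m ^ k < 2 ^ k * S k m :=
  calc m ^ k < (2 * (m - 1)) ^ k := Nat.pow_lt_pow_left (by omega) hk
    _ = 2 ^ k * (m - 1) ^ k := mul_pow ..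
    _ ≤ 2 ^ k * S k m := by
      gcongr
      exact single_le_sum (f := (· ^ k)) (fun _ _ ↦ Nat.zero_le _)
        (mem_Ico.mpr ⟨by omega, by omega⟩)

lemma S_mul_modEq {k : ℕ} (hk : k ≠ 0) (q t : ℕ) : (S k (q * t) : ℤ) ≡ t * S k q [ZMOD q] := by
  rw [← ZMod.intCast_eq_intCast_iff]
  push_cast
  rw [natCast_S hk, natCast_S hk, sum_range_mul_eq_sum_sum]
  simp

lemma S_prime_modEq {p k : ℕ} (hp : p.Prime) (hpk : p - 1 ∣ k) : (S k p : ℤ) ≡ -1 [ZMOD p] := by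
  have := Fact.mk hp
  have hfermat : ∀ j ∈ Ico 1 p, (j : ZMod p) ^ k = 1 := by
    intro j hj
    obtain ⟨c, rfl⟩ := hpk
    rw [mem_Ico] at hj
    rw [pow_mul, ZMod.pow_card_sub_one_eq_one, one_pow]
    rw [Ne, ZMod.natCast_eq_zero_iff]
    exact Nat.not_dvd_of_pos_of_lt hj.1 hj.2
  rw [← ZMod.intCast_eq_intCast_iff]
  push_cast [S]
  rw [sum_congr rfl hfermat, sum_const, Nat.card_Ico, nsmul_one, Nat.cast_sub hp.one_le]
  simp

lemma S_mul_modEq_of_dvd {k n p : ℕ} (hk : k ≠ 0) (hke : Even k) (hpn : p ∣ n) :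
    (S k (n * p) : ℤ) ≡ p * S k n [ZMOD n * p] := by
  have hn2 : (n : ZMod (n * p)) ^ 2 = 0 := by
    rw [← Nat.cast_pow, ZMod.natCast_eq_zero_iff, sq]
    exact mul_dvd_mul_left n hpn
  have hlinear : ∀ i r : ℕ, ((i * n + r : ℕ) : ZMod (n * p)) ^ k
      = (r : ZMod (n * p)) ^ k + (k * n) * (i * (r : ZMod (n * p)) ^ (k - 1)) := by
    intro i r
    have := Polynomial.eval_add_of_sq_eq_zero (Polynomial.X ^ k) (r : ZMod (n * p)) (i * n)
      (by rw [mul_pow, hn2, mul_zero])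
    simp only [Polynomial.eval_pow, Polynomial.eval_X, Polynomial.derivative_X_pow,
      Polynomial.eval_mul, Polynomial.eval_C] at this
    push_cast
    rw [add_comm, this]
    ring
  have hcorr : (k * ∑ i ∈ range p, (i : ZMod (n * p))) * n = 0 := by
    obtain ⟨c, hc⟩ := dvd_mul_sum_range_of_even hke p
    have := congrArg (fun x : ℕ ↦ (x * n : ZMod (n * p))) hc
    simp only [Nat.cast_mul, Nat.cast_sum] at this
    have hN : ((n * p : ℕ) : ZMod (n * p)) = 0 := ZMod.natCast_self _
    push_cast at hN
    linear_combination this + c * hN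
  suffices h : ((S k (n * p) : ℤ) : ZMod (n * p)) = ((p * S k n : ℤ) : ZMod (n * p)) by
    exact_mod_cast (ZMod.intCast_eq_intCast_iff _ _ _).mp h
  push_cast
  rw [natCast_S hk, natCast_S hk, sum_range_mul_eq_sum_sum (fun j ↦ (j : ZMod (n * p)) ^ k)]
  simp only [hlinear, sum_add_distrib, ← mul_sum, ← sum_mul, sum_const, card_range, nsmul_eq_mul]
  linear_combination (∑ r ∈ range n, (r : ZMod (n * p)) ^ (k - 1)) * hcorr

lemma S_prime_pow_modEq {p k : ℕ} (hp : p.Prime) (hk : k ≠ 0) (hke : Even k) (hpk : p - 1 ∣ k)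
    (e : ℕ) : (S k (p ^ (e + 1)) : ℤ) ≡ -p ^ e [ZMOD p ^ (e + 1)] := by
  induction e with
  | zero => simpa using S_prime_modEq hp hpk
  | succ e ih =>
    have step := S_mul_modEq_of_dvd hk hke (dvd_pow_self p e.add_one_ne_zero)
    rw [← pow_succ, Nat.cast_pow] at step
    refine step.trans ?_
    have lifted := ih.mul_left' (c := (p : ℤ))
    rwa [mul_neg, ← pow_succ', ← pow_succ', pow_succ] at lifted

lemma not_pow_succ_dvd_S {p k e t : ℕ} (hp : p.Prime) (hk : k ≠ 0) (hke : Even k)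
    (hpk : p - 1 ∣ k) (ht : ¬ p ∣ t) : ¬ p ^ (e + 1) ∣ S k (p ^ (e + 1) * t) := by
  intro hdvd
  have hcong : (S k (p ^ (e + 1) * t) : ℤ) ≡ t * -p ^ e [ZMOD p ^ (e + 1)] := by
    have hperiodic := S_mul_modEq hk (p ^ (e + 1)) t
    push_cast at hperiodic
    exact hperiodic.trans ((S_prime_pow_modEq hp hk hke hpk e).mul_left _)
  have hzero : (S k (p ^ (e + 1) * t) : ℤ) ≡ 0 [ZMOD p ^ (e + 1)] :=
    Int.modEq_zero_iff_dvd.mpr (by exact_mod_cast hdvd)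
  have htp : (p : ℤ) ^ e * p ∣ p ^ e * t := by
    rw [← pow_succ, mul_comm, ← dvd_neg, ← mul_neg]
    exact Int.modEq_zero_iff_dvd.mp (hcong.symm.trans hzero)
  rw [mul_dvd_mul_iff_left (pow_ne_zero e (by exact_mod_cast hp.ne_zero))] at htp
  exact ht (Int.natCast_dvd_natCast.mp htp)

lemma pow_dvd_of_mul_S_eq_pow {p a k m : ℕ} (hp : p.Prime) (hk : k ≠ 0) (hke : Even k)
    (hpk : p - 1 ∣ k) (hm : m ≠ 0) (hpm : p ∣ m) (h : a * S k m = m ^ k) : p ^ k ∣ a := by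
  obtain ⟨e, t, ht, rfl⟩ := Nat.exists_eq_pow_mul_and_not_dvd hm p hp.ne_one
  obtain ⟨e, rfl⟩ : ∃ e', e = e' + 1 :=
    Nat.exists_eq_succ_of_ne_zero (by rintro rfl; simp_all)
  exact hp.pow_dvd_of_mul_eq_pow hm h (dvd_mul_right _ _) (not_pow_succ_dvd_S hp hk hke hpk ht)

/-- If `a·S_k(m) = m^k` with `m ≥ 4` and `k` even, then for every prime `p`
dividing `m` we have `(p - 1) ∤ k`; in particular `gcd(m, 6) = 1`. -/
theorem no_prime_divisor_with_p_sub_one_dvd_k (a k m : ℕ) (ha : 0 < a)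
    (hk : 0 < k) (hkeven : Even k) (hm4 : 4 ≤ m)
    (heq : a * S k m = m ^ k) :
    (∀ p : ℕ, p.Prime → p ∣ m → ¬ (p - 1) ∣ k) ∧ Nat.gcd m 6 = 1 := by
  have hsub : ∀ p : ℕ, p.Prime → p ∣ m → ¬ (p - 1) ∣ k := by
    intro p hp hpm hpk
    have hpa := pow_dvd_of_mul_S_eq_pow hp hk.ne' hkeven hpk (by omega) hpm heq
    have h2a : 2 ^ k ≤ a := (Nat.pow_le_pow_left hp.two_le k).trans (Nat.le_of_dvd ha hpa)
    have hlt := pow_lt_two_pow_mul_S hk.ne' (by omega : 3 ≤ m)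
    have hle := Nat.mul_le_mul_right (S k m) h2a
    omega
  have h2 : Nat.Coprime 2 m :=
    Nat.prime_two.coprime_iff_not_dvd.mpr fun h ↦ hsub 2 Nat.prime_two h (one_dvd k)
  have h3 : Nat.Coprime 3 m :=
    Nat.prime_three.coprime_iff_not_dvd.mpr fun h ↦ hsub 3 Nat.prime_three h hkeven.two_dvd
  exact ⟨hsub, Nat.Coprime.mul_right h2.symm h3.symm⟩
end

section
/- Suppose a, k, m are positive integers with m ≥ 4 and k even satisfying a·S_k(m) = m^k, and let s be a positive integer. If a has no prime divisor p satisfying p < 2^s, then a divides m^{⌈k/s⌉ − 1}. -/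
/-!
Since `S_k(m) ≥ (m-1)^k` and `2(m-1) > m`, the equation `a·S_k(m) = m^k` forces `a < 2^k`.
A prime power `p^v` exactly dividing `a` has `p ≥ 2^s`, so `2^(sv) ≤ a < 2^k` and `v ≤ ⌈k/s⌉ - 1`;
as every prime factor of `a` divides `m`, this bound on the exponents gives `a ∣ m^(⌈k/s⌉ - 1)`.
-/

namespace Nat

theorem dvd_pow_of_factorization_le {a n t : ℕ} (ha : a ≠ 0) (hn : n ≠ 0)
    (ht : ∀ p, a.factorization p ≤ t) (hdvd : ∀ p, p.Prime → p ∣ a → p ∣ n) : a ∣ n ^ t := by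
  rw [← factorization_le_iff_dvd ha (pow_ne_zero t hn)]
  intro p
  rw [factorization_pow, Finsupp.smul_apply, smul_eq_mul]
  rcases eq_or_ne (a.factorization p) 0 with hv | hv
  · rw [hv]
    exact Nat.zero_le _
  · have hp : p.Prime := prime_of_mem_primeFactors (support_factorization a ▸ Finsupp.mem_support_iff.2 hv)
    have hpn : 0 < n.factorization p := hp.factorization_pos_of_dvd hn (hdvd p hp (dvd_of_factorization_pos hv))
    exact (ht p).trans (Nat.le_mul_of_pos_right t hpn)

theorem pow_factorization_le_of_forall_prime_dvd_le {a b : ℕ} (ha : a ≠ 0)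
    (hb : ∀ q, q.Prime → q ∣ a → b ≤ q) (p : ℕ) : b ^ a.factorization p ≤ a := by
  rcases eq_or_ne (a.factorization p) 0 with hv | hv
  · rw [hv, pow_zero]
    exact one_le_iff_ne_zero.2 ha
  · have hp : p.Prime := prime_of_mem_primeFactors (support_factorization a ▸ Finsupp.mem_support_iff.2 hv)
    calc b ^ a.factorization p ≤ p ^ a.factorization p :=
          Nat.pow_le_pow_left (hb p hp (dvd_of_factorization_pos hv)) _
      _ ≤ a := ordProj_le p ha

end Nat

theorem pow_pred_le_S (k : ℕ) {m : ℕ} (hm : 2 ≤ m) : (m - 1) ^ k ≤ S k m :=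
  Finset.single_le_sum (f := fun j => j ^ k) (fun _ _ => Nat.zero_le _)
    (Finset.mem_Ico.2 ⟨by omega, by omega⟩)

theorem lt_two_pow_of_mul_S_eq_pow {a k m : ℕ} (hk : 0 < k) (hm : 3 ≤ m)
    (heq : a * S k m = m ^ k) : a < 2 ^ k := by
  by_contra! h
  have hm_lt : m ^ k < (2 * (m - 1)) ^ k := Nat.pow_lt_pow_left (by omega) hk.ne'
  have hle : (2 * (m - 1)) ^ k ≤ m ^ k := by
    rw [mul_pow, ← heq]
    exact Nat.mul_le_mul h (pow_pred_le_S k (by omega))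
  exact hm_lt.not_ge hle

theorem dvd_pow_of_no_small_prime_divisor_general (a k m s : ℕ)
    (hk : 0 < k) (hm4 : 4 ≤ m) (hs : 0 < s)
    (heq : a * S k m = m ^ k)
    (hnosmall : ∀ p : ℕ, p.Prime → p ∣ a → ¬ p < 2 ^ s) :
    a ∣ m ^ ((k + s - 1) / s - 1) := by
  have hm : m ≠ 0 := by omega
  have ha : a ≠ 0 := by
    rintro rfl
    exact pow_ne_zero k hm (by rw [← heq, zero_mul])
  have ha_lt : a < 2 ^ k := lt_two_pow_of_mul_S_eq_pow hk (by omega) heq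
  refine Nat.dvd_pow_of_factorization_le ha hm (fun p => ?_) fun p hp hpa =>
    hp.dvd_of_dvd_pow (hpa.trans ⟨S k m, heq.symm⟩)
  have hsv : s * a.factorization p < k := by
    refine (Nat.pow_lt_pow_iff_right one_lt_two).1 (lt_of_le_of_lt ?_ ha_lt)
    rw [pow_mul]
    exact Nat.pow_factorization_le_of_forall_prime_dvd_le ha
      (fun q hq hqa => not_lt.1 (hnosmall q hq hqa)) p
  rw [Nat.le_sub_iff_add_le (Nat.div_pos (by omega) hs), Nat.le_div_iff_mul_le hs, Nat.succ_mul,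
    mul_comm]
  omega

/-- If `a·S_k(m) = m^k` with `m ≥ 4` and `k` even, and `a` has no prime divisor
`p` with `p < 2^s`, then `a` divides `m` to the power `⌈k/s⌉ - 1`. -/
theorem dvd_pow_of_no_small_prime_divisor (a k m s : ℕ) (ha : 0 < a)
    (hk : 0 < k) (hkeven : Even k) (hm4 : 4 ≤ m) (hs : 0 < s)
    (heq : a * S k m = m ^ k)
    (hnosmall : ∀ p : ℕ, p.Prime → p ∣ a → ¬ p < 2 ^ s) :
    a ∣ m ^ ((k + s - 1) / s - 1) :=
  dvd_pow_of_no_small_prime_divisor_general a k m s hk hm4 hs heq hnosmall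
end

section
/- Suppose a, k, m are positive integers with m ≥ 4 and k even satisfying a·S_k(m) = m^k. Then m divides the numerator of the Bernoulli number B_k. -/
open Finset

section Faulhaber

variable (K : Type*) [Field K]

/-- The `i`-th term of Faulhaber's formula, with `C(k+1,i)/(k+1)` rewritten as `C(k,i)/(k+1-i)`. -/
def faulhaberTerm (k m i : ℕ) : K :=
  k.choose i * (bernoulli i : K) * (m : K) ^ (k + 1 - i) / (k + 1 - i : ℕ)

variable {K}

theorem faulhaberTerm_eq_zero_of_odd {k i : ℕ} (hi : Odd i) (hi1 : i ≠ 1) (m : ℕ) :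
    faulhaberTerm K k m i = 0 := by
  simp [faulhaberTerm, bernoulli_eq_bernoulli'_of_ne_one hi1,
    bernoulli'_eq_zero_of_odd hi (by rcases hi with ⟨t, rfl⟩; omega)]

variable [CharZero K]

theorem sum_range_pow_eq_sum_faulhaberTerm (k m : ℕ) :
    ∑ j ∈ range m, (j : K) ^ k = ∑ i ∈ range (k + 1), faulhaberTerm K k m i := by
  have h := congrArg (Rat.cast : ℚ → K) (sum_range_pow m k)
  push_cast at h
  rw [h]
  refine sum_congr rfl fun i hi => ?_
  have hik : i ≤ k := Nat.lt_succ_iff.mp (mem_range.mp hi)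
  have hchoose : (k.choose i : K) * (k + 1) = (k + 1).choose i * (k + 1 - i : ℕ) := by
    exact_mod_cast Nat.choose_mul_succ_eq k i
  have hd : ((k + 1 - i : ℕ) : K) ≠ 0 := by exact_mod_cast (by omega : k + 1 - i ≠ 0)
  rw [faulhaberTerm, div_eq_div_iff (Nat.cast_add_one_ne_zero k) hd]
  linear_combination (bernoulli i : K) * (m : K) ^ (k + 1 - i) * hchoose.symm

theorem S_eq_sum_faulhaberTerm_add {k : ℕ} (hk : k ≠ 0) (m : ℕ) :
    (S k m : K) = ∑ i ∈ range k, faulhaberTerm K k m i + bernoulli k * m := by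
  have hS : (S k m : K) = ∑ j ∈ range m, (j : K) ^ k := by
    rcases Nat.eq_zero_or_pos m with rfl | hm
    · simp [S]
    · rw [S, range_eq_Ico, sum_eq_sum_Ico_succ_bot hm]
      simp [hk]
  rw [hS, sum_range_pow_eq_sum_faulhaberTerm, sum_range_succ, faulhaberTerm]
  simp

theorem faulhaberTerm_one {k : ℕ} (hk : k ≠ 0) (m : ℕ) :
    faulhaberTerm K k m 1 = -((m : K) ^ k / 2) := by
  have hk' : (k : K) ≠ 0 := Nat.cast_ne_zero.mpr hk
  rw [faulhaberTerm, Nat.choose_one_right, bernoulli_one, Nat.add_sub_cancel]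
  push_cast
  field_simp

end Faulhaber

namespace Padic

variable {p : ℕ} [hp : Fact p.Prime]

theorem one_lt_cast_prime : (1 : ℝ) < p := Nat.one_lt_cast.mpr hp.out.one_lt

theorem norm_natCast_le_inv_of_dvd {n : ℕ} (h : p ∣ n) :
    ‖(n : ℚ_[p])‖ ≤ (p : ℝ)⁻¹ := by
  have h' : ((p ^ 1 : ℕ) : ℤ) ∣ n := by simpa using Int.natCast_dvd_natCast.mpr h
  simpa using (norm_int_le_pow_iff_dvd (p := p) n 1).mpr (by exact_mod_cast h')

theorem mul_norm_natCast_le_one_of_dvd {n : ℕ} (h : p ∣ n) :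
    (p : ℝ) * ‖(n : ℚ_[p])‖ ≤ 1 := by
  calc (p : ℝ) * ‖(n : ℚ_[p])‖ ≤ p * (p : ℝ)⁻¹ := by
        gcongr
        exact norm_natCast_le_inv_of_dvd h
    _ = 1 := mul_inv_cancel₀ (zero_lt_one.trans one_lt_cast_prime).ne'

theorem inv_norm_natCast_le_pow {n c : ℕ} (hn : n ≠ 0) (h : n < p ^ (c + 1)) :
    ‖(n : ℚ_[p])‖⁻¹ ≤ (p : ℝ) ^ c := by
  have hv : padicValNat p n ≤ c := by
    have := (Nat.le_of_dvd (Nat.pos_of_ne_zero hn) (pow_padicValNat_dvd (p := p))).trans_lt h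
    exact Nat.lt_succ_iff.mp ((Nat.pow_lt_pow_iff_right hp.out.one_lt).mp this)
  rw [norm_eq_zpow_neg_valuation (Nat.cast_ne_zero.mpr hn), valuation_natCast, ← zpow_neg,
    neg_neg, zpow_natCast]
  exact pow_le_pow_right₀ one_lt_cast_prime.le hv

theorem norm_two_of_ne_two (h : p ≠ 2) : ‖(2 : ℚ_[p])‖ = 1 := by
  simpa using norm_natCast_eq_one_iff.mpr ((Nat.coprime_primes hp.out Nat.prime_two).mpr h)

theorem norm_two_inv_le : ‖(2 : ℚ_[p])⁻¹‖ ≤ p := by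
  rcases eq_or_ne p 2 with rfl | h
  · simp [norm_inv, show ‖(2 : ℚ_[2])‖ = 2⁻¹ by exact_mod_cast norm_p (p := 2)]
  · rw [norm_inv, norm_two_of_ne_two h, inv_one]
    exact one_lt_cast_prime.le

theorem norm_intCast_num_le (q : ℚ) : ‖(q.num : ℚ_[p])‖ ≤ ‖(q : ℚ_[p])‖ := by
  have h : (q.num : ℚ_[p]) = q * q.den := by exact_mod_cast (Rat.mul_den_eq_num q).symm
  rw [h, norm_mul]
  exact mul_le_of_le_one_right (norm_nonneg _) (IsUltrametricDist.norm_natCast_le_one _ _)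

theorem norm_bernoulli_add_inv_le_one {k : ℕ} (hk : 0 < k) (hke : Even k) :
    ‖(bernoulli k : ℚ_[p]) + if p - 1 ∣ k then (p : ℚ_[p])⁻¹ else 0‖ ≤ 1 := by
  obtain ⟨j, rfl⟩ := hke.two_dvd
  obtain ⟨n, hn⟩ := Bernoulli.vonStaudt_clausen j
  set F := (range (2 * j + 2)).filter fun q => q.Prime ∧ q - 1 ∣ 2 * j
  have hpF : p ∈ F ↔ p - 1 ∣ 2 * j := by
    simp only [F, mem_filter, mem_range, hp.out, true_and, and_iff_right_iff_imp]
    intro h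
    have := Nat.le_of_dvd hk h
    omega
  have hsplit : ∑ q ∈ F, (1 : ℚ_[p]) / q =
      (if p - 1 ∣ 2 * j then (p : ℚ_[p])⁻¹ else 0) +
        ∑ q ∈ F.erase p, (1 : ℚ_[p]) / q := by
    split_ifs with h
    · rw [← add_sum_erase F _ (hpF.mpr h), one_div]
    · rw [erase_eq_of_notMem (mt hpF.mp h), zero_add]
  have hrest : ‖∑ q ∈ F.erase p, (1 : ℚ_[p]) / q‖ ≤ 1 := by
    refine IsUltrametricDist.norm_sum_le_of_forall_le_of_nonneg zero_le_one fun q hq => ?_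
    obtain ⟨hqp, hqF⟩ := mem_erase.mp hq
    have hcop : p.Coprime q := (Nat.coprime_primes hp.out (mem_filter.mp hqF).2.1).mpr hqp.symm
    rw [norm_div, norm_one, norm_natCast_eq_one_iff.mpr hcop, div_one]
  have hn' : (bernoulli (2 * j) : ℚ_[p]) + ∑ q ∈ F, (1 : ℚ_[p]) / q = n := by
    have h := congrArg (Rat.cast : ℚ → ℚ_[p]) hn.symm
    push_cast at h
    exact h
  have hB : (bernoulli (2 * j) : ℚ_[p]) + (if p - 1 ∣ 2 * j then (p : ℚ_[p])⁻¹ else 0) =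
      n + -∑ q ∈ F.erase p, (1 : ℚ_[p]) / q := by
    rw [← hn', hsplit]
    ring
  rw [hB]
  refine (IsUltrametricDist.norm_add_le_max _ _).trans (max_le ?_ ?_)
  · exact IsUltrametricDist.norm_intCast_le_one _ _
  · rwa [norm_neg]

theorem norm_bernoulli_of_sub_one_dvd {k : ℕ} (hk : 0 < k) (hke : Even k) (h : p - 1 ∣ k) :
    ‖(bernoulli k : ℚ_[p])‖ = p := by
  have hinv : ‖(p : ℚ_[p])⁻¹‖ = p := by rw [norm_inv, norm_p, inv_inv]
  have hlt : ‖(bernoulli k : ℚ_[p]) + (p : ℚ_[p])⁻¹‖ < ‖(p : ℚ_[p])⁻¹‖ := by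
    have := norm_bernoulli_add_inv_le_one (p := p) hk hke
    rw [if_pos h] at this
    exact hinv ▸ this.trans_lt one_lt_cast_prime
  rw [norm_eq_of_norm_add_lt_right hlt, hinv]

theorem norm_bernoulli_le_one {k : ℕ} (hke : Even k) (h : ¬p - 1 ∣ k) :
    ‖(bernoulli k : ℚ_[p])‖ ≤ 1 := by
  have hk : 0 < k := Nat.pos_of_ne_zero fun hk => h (hk ▸ dvd_zero _)
  simpa [h] using norm_bernoulli_add_inv_le_one (p := p) hk hke

theorem norm_bernoulli_le (i : ℕ) : ‖(bernoulli i : ℚ_[p])‖ ≤ p := by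
  rcases Nat.even_or_odd i with hi | hi
  · rcases Nat.eq_zero_or_pos i with rfl | hi0
    · simpa using one_lt_cast_prime.le
    by_cases h : p - 1 ∣ i
    · exact (norm_bernoulli_of_sub_one_dvd hi0 hi h).le
    · exact (norm_bernoulli_le_one hi h).trans one_lt_cast_prime.le
  · rcases eq_or_ne i 1 with rfl | hi1
    · simpa [bernoulli_one, div_eq_mul_inv] using norm_two_inv_le (p := p)
    · rw [bernoulli_eq_bernoulli'_of_ne_one hi1,
        bernoulli'_eq_zero_of_odd hi (by rcases hi with ⟨t, rfl⟩; omega)]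
      simp

theorem norm_faulhaberTerm_le (k m i : ℕ) :
    ‖faulhaberTerm ℚ_[p] k m i‖ ≤
      p * ‖(m : ℚ_[p])‖ ^ (k + 1 - i) * ‖((k + 1 - i : ℕ) : ℚ_[p])‖⁻¹ := by
  rw [faulhaberTerm, div_eq_mul_inv, norm_mul, norm_mul, norm_mul, norm_pow, norm_inv]
  gcongr
  calc ‖(k.choose i : ℚ_[p])‖ * ‖(bernoulli i : ℚ_[p])‖ ≤ 1 * p := by
        gcongr
        · exact IsUltrametricDist.norm_natCast_le_one _ _
        · exact norm_bernoulli_le i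
    _ = p := one_mul _

/-- The factor `p⁻ⁿ` coming from `mⁿ` absorbs the denominator `k + 1 - i < pⁿ`. -/
theorem norm_faulhaberTerm_le_pow {k m i n j : ℕ} (hpm : p ∣ m) (hi : i ≤ k)
    (hnj : k + 1 - i = n + j) (hlt : k + 1 - i < p ^ n) :
    ‖faulhaberTerm ℚ_[p] k m i‖ ≤ ‖(m : ℚ_[p])‖ ^ j := by
  obtain ⟨c, rfl⟩ : ∃ c, n = c + 1 := Nat.exists_eq_succ_of_ne_zero fun hn => by
    rw [hn, pow_zero] at hlt
    omega
  calc ‖faulhaberTerm ℚ_[p] k m i‖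
      ≤ p * ‖(m : ℚ_[p])‖ ^ (k + 1 - i) * ‖((k + 1 - i : ℕ) : ℚ_[p])‖⁻¹ :=
        norm_faulhaberTerm_le k m i
    _ ≤ p * ‖(m : ℚ_[p])‖ ^ (c + 1 + j) * (p : ℝ) ^ c := by
        rw [hnj]
        gcongr
        exact inv_norm_natCast_le_pow (by omega) (hnj ▸ hlt)
    _ = ((p : ℝ) * ‖(m : ℚ_[p])‖) ^ (c + 1) * ‖(m : ℚ_[p])‖ ^ j := by ring
    _ ≤ ‖(m : ℚ_[p])‖ ^ j :=
        mul_le_of_le_one_left (by positivity)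
          (pow_le_one₀ (by positivity) (mul_norm_natCast_le_one_of_dvd hpm))

theorem norm_sum_faulhaberTerm_le {k m : ℕ} (hpm : p ∣ m) (hke : Even k) :
    ‖∑ i ∈ range k, faulhaberTerm ℚ_[p] k m i‖ ≤ ‖(m : ℚ_[p])‖ := by
  have hr1 : ‖(m : ℚ_[p])‖ ≤ 1 := IsUltrametricDist.norm_natCast_le_one _ _
  refine IsUltrametricDist.norm_sum_le_of_forall_le_of_nonneg (norm_nonneg _) fun i hi => ?_
  have hik := mem_range.mp hi
  rcases Nat.even_or_odd i with hie | hio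
  · have hd : 3 ≤ k + 1 - i := by
      rcases hke with ⟨s, rfl⟩; rcases hie with ⟨t, rfl⟩; omega
    have h2 : k + 1 - i < 2 ^ (k - i) := by
      have := Nat.lt_two_pow_self (n := k - i - 1)
      rw [show k - i = k - i - 1 + 1 by omega, pow_succ]
      omega
    refine (norm_faulhaberTerm_le_pow hpm hik.le (n := k - i) (j := 1) (by omega) ?_).trans_eq
      (pow_one _)
    exact h2.trans_le (Nat.pow_le_pow_left hp.out.two_le _)
  rcases eq_or_ne i 1 with rfl | hi1
  · rw [faulhaberTerm_one (by omega), norm_neg, norm_div, norm_pow, div_eq_mul_inv, ← norm_inv]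
    calc ‖(m : ℚ_[p])‖ ^ k * ‖(2 : ℚ_[p])⁻¹‖ ≤ ‖(m : ℚ_[p])‖ ^ 2 * p := by
          refine mul_le_mul ?_ norm_two_inv_le (norm_nonneg _) (by positivity)
          exact pow_le_pow_of_le_one (norm_nonneg _) hr1 (by rcases hke with ⟨s, rfl⟩; omega)
      _ = p * ‖(m : ℚ_[p])‖ * ‖(m : ℚ_[p])‖ := by ring
      _ ≤ ‖(m : ℚ_[p])‖ :=
          mul_le_of_le_one_left (norm_nonneg _) (mul_norm_natCast_le_one_of_dvd hpm)
  · simp [faulhaberTerm_eq_zero_of_odd hio hi1]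

theorem norm_sum_faulhaberTerm_le_sq {k m : ℕ} (hp5 : 5 ≤ p) (hpm : p ∣ m) (hke : Even k) :
    ‖∑ i ∈ range k, faulhaberTerm ℚ_[p] k m i‖ ≤ ‖(m : ℚ_[p])‖ ^ 2 := by
  have hr1 : ‖(m : ℚ_[p])‖ ≤ 1 := IsUltrametricDist.norm_natCast_le_one _ _
  refine IsUltrametricDist.norm_sum_le_of_forall_le_of_nonneg (by positivity) fun i hi => ?_
  have hik := mem_range.mp hi
  rcases Nat.even_or_odd i with hie | hio
  · have hd : 3 ≤ k + 1 - i := by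
      rcases hke with ⟨s, rfl⟩; rcases hie with ⟨t, rfl⟩; omega
    have h5 : k + 1 - i < 5 ^ (k - 1 - i) := by
      have := Nat.lt_pow_self (n := k - i - 2) (a := 5) (by norm_num)
      rw [show k - 1 - i = k - i - 2 + 1 by omega, pow_succ]
      omega
    refine norm_faulhaberTerm_le_pow hpm hik.le (n := k - 1 - i) (by omega) ?_
    exact h5.trans_le (Nat.pow_le_pow_left hp5 _)
  rcases eq_or_ne i 1 with rfl | hi1
  · rw [faulhaberTerm_one (by omega), norm_neg, norm_div, norm_pow, norm_two_of_ne_two (by omega),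
      div_one]
    exact pow_le_pow_of_le_one (norm_nonneg _) hr1 (by rcases hke with ⟨s, rfl⟩; omega)
  · simp [faulhaberTerm_eq_zero_of_odd hio hi1]

theorem pow_succ_dvd_of_norm_natCast_lt {a n : ℕ} (h : ‖(a : ℚ_[p])‖ < (p : ℝ)⁻¹ ^ n) :
    p ^ (n + 1) ∣ a := by
  rw [inv_pow, ← zpow_natCast, ← zpow_neg, norm_lt_pow_iff_norm_le_pow_sub_one] at h
  have h' : ‖((a : ℤ) : ℚ_[p])‖ ≤ (p : ℝ) ^ (-((n + 1 : ℕ) : ℤ)) := by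
    convert h using 2 <;> push_cast <;> ring
  exact_mod_cast (norm_int_le_pow_iff_dvd _ _).mp h'

theorem five_le_of_not_sub_one_dvd {k : ℕ} (hke : Even k) (h : ¬p - 1 ∣ k) : 5 ≤ p := by
  have h2 := hp.out.two_le
  have h4 : p ≠ 4 := by
    rintro rfl
    exact absurd hp.out (by decide)
  by_contra! h5
  rcases (by omega : p - 1 = 1 ∨ p - 1 = 2) with h1 | h1 <;> rw [h1] at h
  · exact h (one_dvd k)
  · exact h hke.two_dvd

/-- The Faulhaber expansion of `S_k(m)` is dominated by its top term `B_k m`. -/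
theorem sq_norm_lt_norm_S {k m : ℕ} (hk : 0 < k) (hke : Even k) (hm : m ≠ 0) (hpm : p ∣ m)
    (hB : ‖(m : ℚ_[p])‖ < ‖(bernoulli k : ℚ_[p])‖) :
    ‖(m : ℚ_[p])‖ ^ 2 < ‖(S k m : ℚ_[p])‖ := by
  set r := ‖(m : ℚ_[p])‖
  set R := ∑ i ∈ range k, faulhaberTerm ℚ_[p] k m i
  have hr : 0 < r := norm_pos_iff.mpr (Nat.cast_ne_zero.mpr hm)
  suffices h : ‖R‖ < ‖(bernoulli k : ℚ_[p]) * m‖ ∧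
      r ^ 2 < ‖(bernoulli k : ℚ_[p]) * m‖ by
    rw [S_eq_sum_faulhaberTerm_add hk.ne',
      IsUltrametricDist.norm_add_eq_max_of_norm_ne_norm h.1.ne, max_eq_right h.1.le]
    exact h.2
  rw [norm_mul]
  by_cases hdvd : p - 1 ∣ k
  · rw [norm_bernoulli_of_sub_one_dvd hk hke hdvd]
    have hrp : r < p := (IsUltrametricDist.norm_natCast_le_one _ _).trans_lt one_lt_cast_prime
    refine ⟨(norm_sum_faulhaberTerm_le hpm hke).trans_lt ?_, ?_⟩
    · exact lt_mul_of_one_lt_left hr one_lt_cast_prime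
    · rw [sq]
      exact mul_lt_mul_of_pos_right hrp hr
  · have hp5 := five_le_of_not_sub_one_dvd hke hdvd
    have hlt : r ^ 2 < ‖(bernoulli k : ℚ_[p])‖ * r := by
      rw [sq]; exact mul_lt_mul_of_pos_right hB hr
    exact ⟨(norm_sum_faulhaberTerm_le_sq hp5 hpm hke).trans_lt hlt, hlt⟩

theorem norm_bernoulli_le_norm {a k m : ℕ} (ha : 0 < a) (hk : 0 < k) (hke : Even k) (hm : m ≠ 0)
    (hpm : p ∣ m) (heq : a * S k m = m ^ k) (hsmall : a < 2 ^ (k - 1)) :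
    ‖(bernoulli k : ℚ_[p])‖ ≤ ‖(m : ℚ_[p])‖ := by
  by_contra! hB
  have hk2 : 2 ≤ k := by rcases hke with ⟨s, rfl⟩; omega
  have hS := sq_norm_lt_norm_S hk hke hm hpm hB
  have hr : 0 < ‖(m : ℚ_[p])‖ := norm_pos_iff.mpr (Nat.cast_ne_zero.mpr hm)
  have hnorm : ‖(a : ℚ_[p])‖ * ‖(S k m : ℚ_[p])‖ =
      ‖(m : ℚ_[p])‖ ^ (k - 2) * ‖(m : ℚ_[p])‖ ^ 2 := by
    rw [← pow_add, Nat.sub_add_cancel hk2, ← norm_pow, ← norm_mul]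
    exact_mod_cast congrArg norm (congrArg (Nat.cast : ℕ → ℚ_[p]) heq)
  have ha_lt : ‖(a : ℚ_[p])‖ < (p : ℝ)⁻¹ ^ (k - 2) := by
    refine lt_of_lt_of_le ?_ (pow_le_pow_left₀ hr.le (norm_natCast_le_inv_of_dvd hpm) _)
    refine lt_of_mul_lt_mul_right ?_ (norm_nonneg (S k m : ℚ_[p]))
    rw [hnorm]
    exact mul_lt_mul_of_pos_left hS (pow_pos hr _)
  have hdvd := pow_succ_dvd_of_norm_natCast_lt ha_lt
  rw [show k - 2 + 1 = k - 1 by omega] at hdvd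
  have := (Nat.pow_le_pow_left hp.out.two_le (k - 1)).trans (Nat.le_of_dvd ha hdvd)
  omega

end Padic

theorem Padic.natCast_dvd_of_forall_norm_le {m : ℕ} {x : ℤ}
    (h : ∀ (p : ℕ) [Fact p.Prime], ‖(x : ℚ_[p])‖ ≤ ‖(m : ℚ_[p])‖) :
    (m : ℤ) ∣ x := by
  rw [Int.ofNat_dvd_left, Nat.dvd_iff_prime_pow_dvd_dvd]
  intro p j hp hpj
  have : Fact p.Prime := ⟨hp⟩
  have hm : ‖((m : ℤ) : ℚ_[p])‖ ≤ (p : ℝ) ^ (-j : ℤ) :=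
    (Padic.norm_int_le_pow_iff_dvd _ _).mpr (by exact_mod_cast hpj)
  have hx := (Padic.norm_int_le_pow_iff_dvd x j).mp ((h p).trans (by exact_mod_cast hm))
  exact Int.ofNat_dvd_left.mp (by exact_mod_cast hx)

theorem lt_two_pow_of_mul_S_eq {a k m : ℕ} (hk : 2 ≤ k) (hm : 4 ≤ m)
    (heq : a * S k m = m ^ k) : a < 2 ^ (k - 1) := by
  have hlast : (m - 1) ^ k ≤ S k m :=
    single_le_sum (f := fun j => j ^ k) (fun _ _ => Nat.zero_le _)
      (mem_Ico.mpr ⟨by omega, by omega⟩)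
  have hratio : 3 ^ k * a ≤ 4 ^ k := by
    refine Nat.le_of_mul_le_mul_right ?_ (pow_pos (by omega : 0 < m - 1) k)
    calc 3 ^ k * a * (m - 1) ^ k ≤ 3 ^ k * m ^ k := by
          rw [mul_assoc, ← heq]; gcongr
      _ = (3 * m) ^ k := (mul_pow _ _ _).symm
      _ ≤ (4 * (m - 1)) ^ k := Nat.pow_le_pow_left (by omega) k
      _ = 4 ^ k * (m - 1) ^ k := mul_pow _ _ _
  obtain ⟨j, rfl⟩ : ∃ j, k = j + 2 := ⟨k - 2, by omega⟩
  have h46 : 4 ^ j ≤ 6 ^ j := Nat.pow_le_pow_left (by norm_num) j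
  have h4 : 0 < 4 ^ j := pow_pos (by norm_num) j
  by_contra! h
  have : 3 ^ (j + 2) * 2 ^ (j + 1) ≤ 4 ^ (j + 2) :=
    (Nat.mul_le_mul_left _ h).trans (by simpa using hratio)
  rw [show 3 ^ (j + 2) * 2 ^ (j + 1) = 18 * 6 ^ j by rw [show 6 = 3 * 2 by rfl, mul_pow]; ring,
    show 4 ^ (j + 2) = 16 * 4 ^ j by ring] at this
  omega

/-- If `a·S_k(m) = m^k` with `m ≥ 4` and `k` even, then `m` divides the
numerator of the Bernoulli number `B_k`. -/
theorem m_dvd_bernoulli_num (a k m : ℕ) (ha : 0 < a) (hk : 0 < k)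
    (hkeven : Even k) (hm4 : 4 ≤ m) (heq : a * S k m = m ^ k) :
    (m : ℤ) ∣ (bernoulli k).num := by
  have hsmall := lt_two_pow_of_mul_S_eq (by rcases hkeven with ⟨s, rfl⟩; omega) hm4 heq
  refine Padic.natCast_dvd_of_forall_norm_le fun p _ => ?_
  by_cases hpm : p ∣ m
  · exact (Padic.norm_intCast_num_le _).trans
      (Padic.norm_bernoulli_le_norm ha hk hkeven (by omega) hpm heq hsmall)
  · rw [Padic.norm_natCast_eq_one_iff.mpr ((Nat.Prime.coprime_iff_not_dvd Fact.out).mpr hpm)]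
    exact IsUltrametricDist.norm_intCast_le_one _ _
end

section
/- Let q ≥ 5 be a prime and a be a positive integer. Then (2, q) is a helpful pair for a if and only if the Legendre symbol of a² + 36a + 36 modulo q equals −1. -/
/-- `(r, p)` is an irregular pair: `p` is prime, `r` is even with `2 ≤ r ≤ p - 3`,
and `p` divides the numerator of the Bernoulli number `B_r`. -/
def IsIrregularPair (r p : ℕ) : Prop :=
  p.Prime ∧ Even r ∧ 2 ≤ r ∧ r ≤ p - 3 ∧ (p : ℤ) ∣ (bernoulli r).num

/-- A prime `p` is irregular if it divides the numerator of `B_r`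
for some even `r` with `2 ≤ r ≤ p - 3`. -/
def IsIrregularPrime (p : ℕ) : Prop :=
  p.Prime ∧ ∃ r : ℕ, IsIrregularPair r p

/-- A prime is regular if it is not irregular. -/
def IsRegularPrime (p : ℕ) : Prop :=
  p.Prime ∧ ¬ IsIrregularPrime p

/-- `(t, q)` is a helpful pair for `a`: `q` is prime, `t` is even with `2 ≤ t ≤ q - 3`,
`q ∤ a`, `a·S_t(c) ≢ c^t (mod q)` for `1 ≤ c ≤ q - 1`, and `(t, q)` is not an
irregular pair. -/
def IsHelpfulPair (a t q : ℕ) : Prop :=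
  q.Prime ∧ Even t ∧ 2 ≤ t ∧ t ≤ q - 3 ∧ ¬ (q ∣ a) ∧
    (∀ c : ℕ, 1 ≤ c → c ≤ q - 1 → ¬ (a * S t c ≡ c ^ t [MOD q])) ∧
    ¬ IsIrregularPair t q
/-!
Since `6 S₂(c) = 2c³ - 3c² + c`, for `c ≢ 0 (mod q)` the congruence `a S₂(c) ≡ c²` is equivalent
to `c` being a root of `2a x² - (3a + 6) x + a` in `𝔽_q`. This quadratic has constant term `a ≢ 0`,
so it has a nonzero root exactly when it has a root, i.e. when its discriminant
`(3a + 6)² - 8a² = a² + 36a + 36` is a square mod `q`. The remaining conditions of a helpful pair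
hold automatically for `t = 2`, because `B₂ = 1/6`.
-/

lemma six_mul_S_two_add (c : ℕ) : 6 * S 2 c + 3 * c ^ 2 = 2 * c ^ 3 + c := by
  induction c with
  | zero => simp [S]
  | succ n ih =>
    have hS : S 2 (n + 1) = S 2 n + n ^ 2 := by
      rcases Nat.eq_zero_or_pos n with rfl | hn
      · simp [S]
      · exact Finset.sum_Ico_succ_top hn _
    rw [hS]
    linear_combination ih

lemma not_isIrregularPair_two (q : ℕ) : ¬ IsIrregularPair 2 q := by
  rintro ⟨hq, -, -, -, hdvd⟩
  have hB : bernoulli 2 = 1 / 6 := by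
    rw [bernoulli_eq_bernoulli'_of_ne_one (by norm_num), bernoulli'_two]
  rw [hB, show ((1 / 6 : ℚ)).num = 1 by norm_num] at hdvd
  exact hq.not_dvd_one (Int.natCast_dvd_natCast.mp hdvd)

theorem exists_quadratic_eq_zero_iff_isSquare_discrim {K : Type*} [Field K] [NeZero (2 : K)]
    {a b c : K} (ha : a ≠ 0) :
    (∃ x, a * (x * x) + b * x + c = 0) ↔ IsSquare (discrim a b c) := by
  constructor
  · rintro ⟨x, hx⟩
    exact ⟨2 * a * x + b, by rw [discrim_eq_sq_of_quadratic_eq_zero hx, sq]⟩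
  · exact exists_quadratic_eq_zero ha

lemma ZMod.natCast_ne_zero_of_pos_of_lt {n q : ℕ} (hn : 0 < n) (hnq : n < q) :
    (n : ZMod q) ≠ 0 := by
  rw [Ne, ZMod.natCast_eq_zero_iff]
  exact fun hdvd => absurd (Nat.le_of_dvd hn hdvd) (by omega)

lemma ZMod.exists_natCast_iff_exists_ne_zero {q : ℕ} [NeZero q] (P : ZMod q → Prop) :
    (∃ c : ℕ, 1 ≤ c ∧ c ≤ q - 1 ∧ P c) ↔ ∃ x : ZMod q, x ≠ 0 ∧ P x := by
  constructor
  · rintro ⟨c, hc1, hcq, hP⟩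
    exact ⟨c, ZMod.natCast_ne_zero_of_pos_of_lt hc1 (by omega), hP⟩
  · rintro ⟨x, hx, hP⟩
    have hpos : 0 < x.val := Nat.pos_of_ne_zero ((ZMod.val_ne_zero x).mpr hx)
    have hlt : x.val < q := ZMod.val_lt x
    exact ⟨x.val, hpos, by omega, by rwa [ZMod.natCast_zmod_val]⟩

section PowerSum

variable {q : ℕ} [Fact q.Prime]

lemma ZMod.six_ne_zero_of_five_le (hq5 : 5 ≤ q) : (6 : ZMod q) ≠ 0 := by
  rw [show (6 : ZMod q) = (2 : ℕ) * (3 : ℕ) by norm_num]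
  exact mul_ne_zero (ZMod.natCast_ne_zero_of_pos_of_lt two_pos (by omega))
    (ZMod.natCast_ne_zero_of_pos_of_lt three_pos (by omega))

lemma mul_S_two_modEq_sq_iff (h6 : (6 : ZMod q) ≠ 0) (a c : ℕ) (hc : (c : ZMod q) ≠ 0) :
    a * S 2 c ≡ c ^ 2 [MOD q] ↔
      2 * (a : ZMod q) * (c * c) + -(3 * a + 6) * c + a = 0 := by
  have hS : (6 : ZMod q) * S 2 c + 3 * c ^ 2 = 2 * c ^ 3 + c := by
    exact_mod_cast congrArg (Nat.cast : ℕ → ZMod q) (six_mul_S_two_add c)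
  rw [← ZMod.natCast_eq_natCast_iff]
  push_cast
  constructor
  · intro h
    refine (mul_eq_zero.mp ?_).resolve_left hc
    linear_combination (6 : ZMod q) * h - (a : ZMod q) * hS
  · intro h
    refine mul_left_cancel₀ h6 ?_
    linear_combination (c : ZMod q) * h + (a : ZMod q) * hS

lemma exists_mul_S_two_modEq_sq_iff (h6 : (6 : ZMod q) ≠ 0) (a : ℕ) (ha : (a : ZMod q) ≠ 0) :
    (∃ c : ℕ, 1 ≤ c ∧ c ≤ q - 1 ∧ a * S 2 c ≡ c ^ 2 [MOD q]) ↔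
      ∃ x : ZMod q, 2 * (a : ZMod q) * (x * x) + -(3 * a + 6) * x + a = 0 := calc
  _ ↔ ∃ c : ℕ, 1 ≤ c ∧ c ≤ q - 1 ∧
        2 * (a : ZMod q) * (c * c) + -(3 * a + 6) * c + a = 0 :=
      exists_congr fun c => and_congr_right fun hc1 => and_congr_right fun hcq =>
        mul_S_two_modEq_sq_iff h6 a c (ZMod.natCast_ne_zero_of_pos_of_lt hc1 (by omega))
  _ ↔ ∃ x : ZMod q, x ≠ 0 ∧ 2 * (a : ZMod q) * (x * x) + -(3 * a + 6) * x + a = 0 :=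
      ZMod.exists_natCast_iff_exists_ne_zero fun x : ZMod q =>
        2 * (a : ZMod q) * (x * x) + -(3 * (a : ZMod q) + 6) * x + a = 0
  _ ↔ _ := by
      refine ⟨fun ⟨x, _, hx⟩ => ⟨x, hx⟩, fun ⟨x, hx⟩ => ⟨x, ?_, hx⟩⟩
      rintro rfl
      exact ha (by simpa using hx)

end PowerSum

theorem helpful_pair_two_iff_general (q a : ℕ) (hq : q.Prime) (hq5 : 5 ≤ q) :
    IsHelpfulPair a 2 q ↔
      @legendreSym q ⟨hq⟩ ((a : ℤ) ^ 2 + 36 * (a : ℤ) + 36) = -1 := by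
  have := Fact.mk hq
  have : NeZero (2 : ZMod q) :=
    ⟨by exact_mod_cast ZMod.natCast_ne_zero_of_pos_of_lt (q := q) two_pos (by omega)⟩
  rw [legendreSym.eq_neg_one_iff]
  push_cast
  by_cases hqa : q ∣ a
  · have ha0 : (a : ZMod q) = 0 := (ZMod.natCast_eq_zero_iff a q).mpr hqa
    simp only [IsHelpfulPair, hqa, not_true_eq_false, false_and, and_false, false_iff, ha0]
    exact fun h => h ⟨6, by ring⟩
  have ha0 : (a : ZMod q) ≠ 0 := by rwa [Ne, ZMod.natCast_eq_zero_iff]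
  calc IsHelpfulPair a 2 q
      ↔ ¬ ∃ c : ℕ, 1 ≤ c ∧ c ≤ q - 1 ∧ a * S 2 c ≡ c ^ 2 [MOD q] := by
        simp only [IsHelpfulPair, hq, even_two, le_refl, hqa, not_isIrregularPair_two,
          not_false_eq_true, true_and, and_true, not_exists, not_and]
        exact and_iff_right (by omega)
    _ ↔ ¬ ∃ x : ZMod q, 2 * (a : ZMod q) * (x * x) + -(3 * a + 6) * x + a = 0 := by
        rw [exists_mul_S_two_modEq_sq_iff (ZMod.six_ne_zero_of_five_le hq5) a ha0]
    _ ↔ ¬ IsSquare ((a : ZMod q) ^ 2 + 36 * a + 36) := by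
        rw [exists_quadratic_eq_zero_iff_isSquare_discrim (mul_ne_zero two_ne_zero ha0), discrim]
        ring_nf

/-- Let `q ≥ 5` be a prime and `a` a positive integer. Then `(2, q)` is a
helpful pair for `a` if and only if the Legendre symbol of `a² + 36a + 36`
modulo `q` equals `-1`. -/
theorem helpful_pair_two_iff (q a : ℕ) (hq : q.Prime) (hq5 : 5 ≤ q)
    (ha : 0 < a) :
    IsHelpfulPair a 2 q ↔
      @legendreSym q ⟨hq⟩ ((a : ℤ) ^ 2 + 36 * (a : ℤ) + 36) = -1 :=
  helpful_pair_two_iff_general q a hq hq5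
end

section
/- Let p be a prime such that 2p + 1 is an irregular prime dividing a, and let (r, 2p + 1) be an irregular pair. Let ℓ be a positive integer with p ∤ ℓ, let q₀, q₁, …, q_{ℓ−1} be odd primes (not necessarily distinct) with (q_j − 1) | 2ℓ for each j, and let t₀, t₁, …, t_{ℓ−1} be positive integers with t_j ≡ r + 2pj (mod q_j − 1) for 0 ≤ j ≤ ℓ − 1. Then for at least one index j with 0 ≤ j ≤ ℓ − 1, the pair (t_j, q_j) is not a helpful pair for a. -/
/-!
Write `r = 2s`. Since `p` is invertible modulo `ℓ`, some `j < ℓ` has `ℓ ∣ pj + s`, so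
`2ℓ ∣ r + 2pj`, and hence `q_j - 1 ∣ 2ℓ` divides `t_j`. A helpful pair `(t, q)` has
`2 ≤ t ≤ q - 3`, which leaves no room for a positive multiple of `q - 1`.
-/

theorem Nat.exists_lt_dvd_mul_add_of_coprime {p ℓ : ℕ} (hℓ : 0 < ℓ) (hpℓ : p.Coprime ℓ)
    (s : ℕ) : ∃ j < ℓ, ℓ ∣ p * j + s := by
  have : NeZero ℓ := ⟨hℓ.ne'⟩
  set j : ZMod ℓ := -(s : ZMod ℓ) * (p : ZMod ℓ)⁻¹
  refine ⟨j.val, j.val_lt, (ZMod.natCast_eq_zero_iff _ _).mp ?_⟩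
  have hinv : (p : ZMod ℓ) * (p : ZMod ℓ)⁻¹ = 1 := ZMod.coe_mul_inv_eq_one p hpℓ
  push_cast
  rw [ZMod.natCast_val, ZMod.cast_id]
  linear_combination (-(s : ZMod ℓ)) * hinv

theorem not_isHelpfulPair_of_sub_one_dvd {a t q : ℕ} (h : q - 1 ∣ t) :
    ¬ IsHelpfulPair a t q := by
  rintro ⟨-, -, ht2, htq, -⟩
  have := Nat.le_of_dvd (by omega) h
  omega

theorem exists_not_helpful_pair_general (a p r ℓ : ℕ) (q t : ℕ → ℕ)
    (hp : p.Prime) (hpair : IsIrregularPair r (2 * p + 1))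
    (hℓ : 0 < ℓ) (hpℓ : ¬ p ∣ ℓ)
    (hq : ∀ j, j < ℓ → (q j).Prime ∧ Odd (q j) ∧ (q j - 1) ∣ 2 * ℓ)
    (ht : ∀ j, j < ℓ → 0 < t j ∧ t j ≡ r + 2 * p * j [MOD q j - 1]) :
    ∃ j, j < ℓ ∧ ¬ IsHelpfulPair a (t j) (q j) := by
  obtain ⟨s, rfl⟩ := hpair.2.1.two_dvd
  obtain ⟨j, hjℓ, hj⟩ :=
    Nat.exists_lt_dvd_mul_add_of_coprime hℓ (hp.coprime_iff_not_dvd.mpr hpℓ) s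
  have h2ℓ : 2 * ℓ ∣ 2 * s + 2 * p * j := by
    rw [show 2 * s + 2 * p * j = 2 * (p * j + s) by ring]
    exact mul_dvd_mul_left 2 hj
  have htj : q j - 1 ∣ t j :=
    Nat.modEq_zero_iff_dvd.mp ((ht j hjℓ).2.trans
      (Nat.modEq_zero_iff_dvd.mpr ((hq j hjℓ).2.2.trans h2ℓ)))
  exact ⟨j, hjℓ, not_isHelpfulPair_of_sub_one_dvd htj⟩

/-- Let `p` be a prime such that `2p + 1` is an irregular prime dividing `a`,
and let `(r, 2p + 1)` be an irregular pair. Let `ℓ` be a positive integer with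
`p ∤ ℓ`, let `q 0, …, q (ℓ-1)` be odd primes with `(q j - 1) ∣ 2ℓ`, and let
`t 0, …, t (ℓ-1)` be positive integers with `t j ≡ r + 2pj (mod q j - 1)`.
Then at least one pair `(t j, q j)` is not a helpful pair for `a`. -/
theorem exists_not_helpful_pair (a p r ℓ : ℕ) (q t : ℕ → ℕ)
    (ha : 0 < a) (hp : p.Prime) (hirr : IsIrregularPrime (2 * p + 1))
    (hdvd : (2 * p + 1) ∣ a) (hpair : IsIrregularPair r (2 * p + 1))
    (hℓ : 0 < ℓ) (hpℓ : ¬ p ∣ ℓ)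
    (hq : ∀ j, j < ℓ → (q j).Prime ∧ Odd (q j) ∧ (q j - 1) ∣ 2 * ℓ)
    (ht : ∀ j, j < ℓ → 0 < t j ∧ t j ≡ r + 2 * p * j [MOD q j - 1]) :
    ∃ j, j < ℓ ∧ ¬ IsHelpfulPair a (t j) (q j) :=
  exists_not_helpful_pair_general a p r ℓ q t hp hpair hℓ hpℓ hq ht
end

section
/- Suppose a, k, m are positive integers with m ≥ 4 and k even satisfying a·S_k(m) = m^k. Then m − 1 and 2m − 1 are both squarefree, and every prime p dividing (m − 1)(2m − 1) satisfies (p − 1) | k. -/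
open Finset

theorem FiniteField.sum_pow_eq_ite {K : Type*} [Field K] [Fintype K] {k : ℕ} (hk : k ≠ 0) :
    ∑ x : K, x ^ k = if Fintype.card K - 1 ∣ k then -1 else 0 := by
  classical
  rw [Fintype.sum_eq_add_sum_subtype_ne _ 0, zero_pow hk, zero_add,
    ← (unitsEquivNeZero (G₀ := K)).sum_comp]
  exact FiniteField.sum_pow_units K k

theorem ZMod.sum_range_natCast {M : Type*} [AddCommMonoid M] (n : ℕ) [NeZero n]
    (f : ZMod n → M) : ∑ j ∈ range n, f j = ∑ x, f x :=
  sum_nbij' (↑) ZMod.val (by simp) (by simp [ZMod.val_lt])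
    (fun j hj ↦ ZMod.val_cast_of_lt (mem_range.1 hj)) (fun x _ ↦ ZMod.natCast_zmod_val x)
    (fun _ _ ↦ rfl)

theorem ZMod.sum_range_mul_natCast {M : Type*} [AddCommMonoid M] (c n : ℕ) [NeZero n]
    (f : ZMod n → M) : ∑ j ∈ range (c * n), f j = c • ∑ x, f x := by
  induction c with
  | zero => simp
  | succ c ih =>
    rw [add_mul, one_mul, sum_range_add, ih, ← ZMod.sum_range_natCast n, succ_nsmul]
    simp

theorem S_succ {k : ℕ} (hk : k ≠ 0) (n : ℕ) : S k (n + 1) = S k n + n ^ k := by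
  rw [S_eq_sum_range hk, S_eq_sum_range hk, sum_range_succ]

theorem natCast_S_succ_of_natCast_eq_zero {R : Type*} [Semiring R] {k n : ℕ} (hk : k ≠ 0)
    (hn : (n : R) = 0) : (S k (n + 1) : R) = S k n := by
  rw [S_succ hk, Nat.cast_add, Nat.cast_pow, hn, zero_pow hk, add_zero]

theorem natCast_S_mul_zmod {k : ℕ} (hk : k ≠ 0) (c p : ℕ) [NeZero p] :
    (S k (c * p) : ZMod p) = c * ∑ x : ZMod p, x ^ k := by
  rw [S_eq_sum_range hk]
  push_cast
  rw [ZMod.sum_range_mul_natCast c p (· ^ k), nsmul_eq_mul]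

theorem natCast_S_two_mul_sub_one {R : Type*} [CommRing R] {k m : ℕ} (hk : Even k)
    (h : ((2 * m - 1 : ℕ) : R) = 0) : (S k (2 * m - 1) : R) = 2 * S k m := by
  rcases Nat.eq_zero_or_pos m with rfl | hm
  · simp [S]
  have reflect : ∑ j ∈ Ico m (2 * m - 1), (j : R) ^ k = S k m :=
    calc ∑ j ∈ Ico m (2 * m - 1), (j : R) ^ k
        = ∑ j ∈ Ico m (2 * m - 1), ((2 * m - 1 - j : ℕ) : R) ^ k := by
          refine sum_congr rfl fun j hj ↦ ?_
          rw [Nat.cast_sub (mem_Ico.1 hj).2.le, h, zero_sub, hk.neg_pow]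
      _ = S k m := by
          rw [sum_Ico_reflect (fun j : ℕ ↦ (j : R) ^ k) m (Nat.le_succ _), S, Nat.cast_sum]
          push_cast
          congr 2 <;> omega
  rw [S, ← sum_Ico_consecutive _ hm (by omega : m ≤ 2 * m - 1)]
  push_cast
  rw [reflect, S]
  push_cast
  ring

theorem natCast_S_ne_zero_of_mul_eq_pow {R : Type*} [Semiring R] [NoZeroDivisors R]
    {a k m : ℕ} (heq : a * S k m = m ^ k) (hm : (m : R) ≠ 0) : (S k m : R) ≠ 0 := by
  intro hS
  apply pow_ne_zero k hm
  rw [← Nat.cast_pow, ← heq, Nat.cast_mul, hS, mul_zero]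

section

variable {k n p : ℕ} [Fact p.Prime]

theorem not_mul_self_dvd_and_sub_one_dvd_of_natCast_S_ne_zero (hk : k ≠ 0) (hpn : p ∣ n)
    (hS : (S k n : ZMod p) ≠ 0) : ¬ p * p ∣ n ∧ p - 1 ∣ k := by
  obtain ⟨c, rfl⟩ := hpn
  rw [mul_comm p c, natCast_S_mul_zmod hk, FiniteField.sum_pow_eq_ite hk, ZMod.card] at hS
  refine ⟨fun hpp ↦ ?_, ?_⟩
  · have hpc : p ∣ c := (Nat.mul_dvd_mul_iff_left (Fact.out : p.Prime).pos).1 hpp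
    simp [(ZMod.natCast_eq_zero_iff c p).2 hpc] at hS
  · by_contra hpk
    simp [hpk] at hS

variable {a m : ℕ}

theorem not_mul_self_dvd_and_sub_one_dvd_of_dvd_sub_one (hk : k ≠ 0) (hm : m ≠ 0)
    (heq : a * S k m = m ^ k) (hpm : p ∣ m - 1) : ¬ p * p ∣ m - 1 ∧ p - 1 ∣ k := by
  have h0 : ((m - 1 : ℕ) : ZMod p) = 0 := (ZMod.natCast_eq_zero_iff _ _).2 hpm
  have hm1 : (m : ZMod p) = 1 := by
    rw [← Nat.sub_add_cancel (Nat.one_le_iff_ne_zero.2 hm), Nat.cast_succ, h0, zero_add]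
  have hS := natCast_S_succ_of_natCast_eq_zero hk h0
  rw [Nat.sub_add_cancel (Nat.one_le_iff_ne_zero.2 hm)] at hS
  refine not_mul_self_dvd_and_sub_one_dvd_of_natCast_S_ne_zero hk hpm ?_
  rw [← hS]
  exact natCast_S_ne_zero_of_mul_eq_pow heq (hm1 ▸ one_ne_zero)

theorem not_mul_self_dvd_and_sub_one_dvd_of_dvd_two_mul_sub_one (hk : k ≠ 0) (hkeven : Even k)
    (hm : m ≠ 0) (heq : a * S k m = m ^ k) (hpm : p ∣ 2 * m - 1) :
    ¬ p * p ∣ 2 * m - 1 ∧ p - 1 ∣ k := by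
  have h0 : ((2 * m - 1 : ℕ) : ZMod p) = 0 := (ZMod.natCast_eq_zero_iff _ _).2 hpm
  have h2m : (2 : ZMod p) * m = 1 := by
    rw [Nat.cast_sub (by omega), sub_eq_zero] at h0
    exact_mod_cast h0
  refine not_mul_self_dvd_and_sub_one_dvd_of_natCast_S_ne_zero hk hpm ?_
  rw [natCast_S_two_mul_sub_one hkeven h0]
  exact mul_ne_zero (left_ne_zero_of_mul_eq_one h2m)
    (natCast_S_ne_zero_of_mul_eq_pow heq (right_ne_zero_of_mul_eq_one h2m))

end

theorem squarefree_m_sub_one_general (a k m : ℕ) (hk : 0 < k)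
    (hkeven : Even k) (hm4 : 4 ≤ m) (heq : a * S k m = m ^ k) :
    Squarefree (m - 1) ∧ Squarefree (2 * m - 1) ∧
      ∀ p : ℕ, p.Prime → p ∣ (m - 1) * (2 * m - 1) → (p - 1) ∣ k := by
  have hm : m ≠ 0 := by omega
  have hA (p : ℕ) (hp : p.Prime) : p ∣ m - 1 → ¬ p * p ∣ m - 1 ∧ p - 1 ∣ k :=
    have := Fact.mk hp
    not_mul_self_dvd_and_sub_one_dvd_of_dvd_sub_one hk.ne' hm heq
  have hB (p : ℕ) (hp : p.Prime) : p ∣ 2 * m - 1 → ¬ p * p ∣ 2 * m - 1 ∧ p - 1 ∣ k :=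
    have := Fact.mk hp
    not_mul_self_dvd_and_sub_one_dvd_of_dvd_two_mul_sub_one hk.ne' hkeven hm heq
  refine ⟨Nat.squarefree_iff_prime_squarefree.2 fun p hp hpp ↦
      (hA p hp (dvd_of_mul_left_dvd hpp)).1 hpp,
    Nat.squarefree_iff_prime_squarefree.2 fun p hp hpp ↦
      (hB p hp (dvd_of_mul_left_dvd hpp)).1 hpp,
    fun p hp hpm ↦ ?_⟩
  rcases hp.dvd_mul.1 hpm with h | h
  · exact (hA p hp h).2
  · exact (hB p hp h).2

/-- If `a·S_k(m) = m^k` with `m ≥ 4` and `k` even, then `m - 1` and `2m - 1`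
are squarefree, and every prime `p` dividing `(m - 1)(2m - 1)` satisfies
`(p - 1) ∣ k`. -/
theorem squarefree_m_sub_one (a k m : ℕ) (ha : 0 < a) (hk : 0 < k)
    (hkeven : Even k) (hm4 : 4 ≤ m) (heq : a * S k m = m ^ k) :
    Squarefree (m - 1) ∧ Squarefree (2 * m - 1) ∧
      ∀ p : ℕ, p.Prime → p ∣ (m - 1) * (2 * m - 1) → (p - 1) ∣ k :=
  squarefree_m_sub_one_general a k m hk hkeven hm4 heq
end
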